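/- Let x be a chain-point for the chain V_0 ⊊ V_1 ⊊ … ⊊ V_k. Then there exists a Gao-tree T of G all of whose edges lie in the support of x, i.e., x_e > 0 for every e ∈ T. -/

import Mathlib

open Finset
open scoped Classical

variable {V : Type*} [Fintype V]

/-- The set of edges of `G` with one endpoint in `S₁` and the other in `S₂`. -/
noncomputable def cutBetween (G : SimpleGraph V) (S₁ S₂ : Finset V) : Finset (Sym2 V) :=
  G.edgeFinset.filter (fun e => ∃ u v, e = s(u, v) ∧ u ∈ S₁ ∧ v ∈ S₂)

/-- The cut `δ(S)`: edges of `G` with exactly one endpoint in `S`. -/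
noncomputable def cut (G : SimpleGraph V) (S : Finset V) : Finset (Sym2 V) :=
  cutBetween G S Sᶜ

/-- `E(S)`: edges of `G` with both endpoints in `S`. -/
noncomputable def inducedEdges (G : SimpleGraph V) (S : Finset V) : Finset (Sym2 V) :=
  G.edgeFinset.filter (fun e => ∀ v ∈ e, v ∈ S)

/-- `T` is the edge set of a spanning tree of `G`. -/
def IsSpanningTree (G : SimpleGraph V) (T : Finset (Sym2 V)) : Prop :=
  (T : Set (Sym2 V)) ⊆ G.edgeSet ∧ (SimpleGraph.fromEdgeSet (T : Set (Sym2 V))).IsTree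

/-- Characteristic vector of a set of edges. -/
noncomputable def chi (T : Finset (Sym2 V)) : Sym2 V → ℝ :=
  fun e => if e ∈ T then 1 else 0

/-- The spanning tree polytope `Sp(G)`. -/
noncomputable def spanningTreePolytope (G : SimpleGraph V) : Set (Sym2 V → ℝ) :=
  convexHull ℝ {x | ∃ T : Finset (Sym2 V), IsSpanningTree G T ∧ x = chi T}

/-- The level sets `L_i = V_i \ V_{i-1}` of a chain `V_0 ⊊ … ⊊ V_k` (with `V_{-1} = ∅`,
`V_{k+1} = V`). -/
noncomputable def level (Vc : ℕ → Finset V) (k : ℕ) : ℕ → Finset V :=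
  fun i => if i = 0 then Vc 0 else if i ≤ k then Vc i \ Vc (i - 1) else Finset.univ \ Vc k

/-- `x` is a chain-point for the chain `V_0 ⊊ … ⊊ V_k`. -/
def IsChainPoint (G : SimpleGraph V) (Vc : ℕ → Finset V) (k : ℕ) (x : Sym2 V → ℝ) : Prop :=
  x ∈ spanningTreePolytope G ∧
  (∑ e ∈ cut G (Vc 0), x e) = 1 ∧
  (∑ e ∈ cut G (Vc k), x e) = 1 ∧
  (∀ i, 1 ≤ i → i ≤ k - 1 → (∑ e ∈ cut G (Vc i), x e) < 2) ∧
  (∀ i, 1 ≤ i → i ≤ k →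
    (∑ v ∈ level Vc k i, ∑ e ∈ cut G {v}, x e) = 2 * ((level Vc k i).card : ℝ))

/-- A Gao-tree for the chain `V_0 ⊊ … ⊊ V_k`: a spanning tree meeting each cut `δ(V_i)`
in exactly one edge. -/
def IsGaoTree (G : SimpleGraph V) (Vc : ℕ → Finset V) (k : ℕ) (T : Finset (Sym2 V)) : Prop :=
  IsSpanningTree G T ∧ ∀ i ≤ k, (T ∩ cut G (Vc i)).card = 1

/-- A Gao-tree for the subchain of `V_0 ⊊ … ⊊ V_k` given by the index set `I`. -/
def IsGaoTreeOn (G : SimpleGraph V) (Vc : ℕ → Finset V) (I : Finset ℕ)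
    (T : Finset (Sym2 V)) : Prop :=
  IsSpanningTree G T ∧ ∀ i ∈ I, (T ∩ cut G (Vc i)).card = 1

/-- `Sp_𝒞(G)`: the convex hull of characteristic vectors of Gao-trees. -/
noncomputable def gaoPolytope (G : SimpleGraph V) (Vc : ℕ → Finset V) (k : ℕ) :
    Set (Sym2 V → ℝ) :=
  convexHull ℝ {x | ∃ T : Finset (Sym2 V), IsGaoTree G Vc k T ∧ x = chi T}

/-- `F` is the edge set of a spanning tree of the induced subgraph `G(U)`. -/
def IsSpanningTreeOfInduced (G : SimpleGraph V) (U : Finset V) (F : Finset (Sym2 V)) : Prop :=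
  (F : Set (Sym2 V)) ⊆ G.edgeSet ∧ (∀ e ∈ F, ∀ v ∈ e, v ∈ U) ∧
  F.card = U.card - 1 ∧
  ∀ u ∈ U, ∀ v ∈ U, (SimpleGraph.fromEdgeSet (F : Set (Sym2 V))).Reachable u v

/-- The rank of `X` in the cycle matroid of `G`. -/
noncomputable def cycleRank (G : SimpleGraph V) (X : Finset (Sym2 V)) : ℕ :=
  (G.edgeFinset.powerset.filter (fun T => IsSpanningTree G T)).sup (fun T => (T ∩ X).card)

/-- The rank of `X` in the matroid whose bases are the Gao-trees. -/
noncomputable def gaoRank (G : SimpleGraph V) (Vc : ℕ → Finset V) (k : ℕ)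
    (X : Finset (Sym2 V)) : ℕ :=
  (G.edgeFinset.powerset.filter (fun T => IsGaoTree G Vc k T)).sup (fun T => (T ∩ X).card)

/-- `x` is a solution of the `s`–`t` path TSP subtour elimination LP. -/
def IsSubtourLPSolution (G : SimpleGraph V) (s t : V) (x : Sym2 V → ℝ) : Prop :=
  x ∈ spanningTreePolytope G ∧
  (∀ v, v ≠ s → v ≠ t → (∑ e ∈ cut G {v}, x e) = 2) ∧
  (∑ e ∈ cut G {s}, x e) = 1 ∧ (∑ e ∈ cut G {t}, x e) = 1

/-- Rank function of a matroid on a finite ground set, as a function on finsets. -/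
noncomputable def mrank {E : Type*} [Fintype E] (M : Matroid E) (X : Finset E) : ℕ :=
  (X.powerset.filter (fun I : Finset E => M.Indep (I : Set E))).sup Finset.card

/-- Convex hull of characteristic vectors of independent sets of a matroid. -/
noncomputable def indepPolytope {E : Type*} [Fintype E] (M : Matroid E) : Set (E → ℝ) :=
  convexHull ℝ {x | ∃ I : Finset E, M.Indep (I : Set E) ∧
    x = fun e => if e ∈ I then (1 : ℝ) else 0}

/-!
A spanning tree has at most `|S| - 1` edges inside a vertex set `S`, so every `x ∈ Sp(G)` has
`x(E(S)) ≤ |S| - 1`, and `x(E(S)) ≤ |S| - 2` when `S` splits into two parts with no support edge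
between them. Through the handshake identity, the degree conditions and `x(E) = |V| - 1` turn this
into two facts about the support of `x`: it connects every level `L_i` internally, and it has an
edge between `L_i` and `L_{i+1}` for every `i ≤ k`, since otherwise `x(δ(L_i)) + x(δ(L_{i+1}))`
would be bounded by `x(δ(V_{i-1})) + x(δ(V_{i+1}))`, which is too small. The support edges inside
the levels and one such edge between consecutive levels form a connected graph, and any spanning
tree of it meets `δ(V_i)` only in the chosen edge between `L_i` and `L_{i+1}`.
-/

section Graphs

variable {α : Type*} {G H : SimpleGraph α}

lemma SimpleGraph.Connected.of_forall_adj_reachable (hG : G.Connected)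
    (h : ∀ u v, G.Adj u v → H.Reachable u v) : H.Connected := by
  have := hG.nonempty
  refine ⟨fun u v => ?_⟩
  obtain ⟨p⟩ := hG.preconnected u v
  induction p with
  | nil => rfl
  | cons hadj _ ih => exact (h _ _ hadj).trans ih

lemma SimpleGraph.Connected.exists_adj_mem_not_mem (hG : G.Connected) {S : Finset α} {u v : α}
    (hu : u ∈ S) (hv : v ∉ S) : ∃ a b, G.Adj a b ∧ a ∈ S ∧ b ∉ S := by
  obtain ⟨p⟩ := hG.preconnected u v
  obtain ⟨d, -, hd₁, hd₂⟩ := p.exists_boundary_dart S hu hv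
  exact ⟨_, _, d.adj, hd₁, hd₂⟩

lemma SimpleGraph.reachable_of_forall_exists_adj {L : Finset α}
    (h : ∀ A ⊆ L, A.Nonempty → (L \ A).Nonempty → ∃ a ∈ A, ∃ b ∈ L \ A, H.Adj a b)
    {u v : α} (hu : u ∈ L) (hv : v ∈ L) : H.Reachable u v := by
  by_contra huv
  obtain ⟨a, ha, b, hb, hab⟩ := h (L.filter (H.Reachable u)) (filter_subset _ _)
    ⟨u, mem_filter.2 ⟨hu, .rfl⟩⟩ ⟨v, mem_sdiff.2 ⟨hv, fun hv' => huv (mem_filter.1 hv').2⟩⟩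
  rw [mem_sdiff, mem_filter] at hb
  exact hb.2 ⟨hb.1, (mem_filter.1 ha).2.trans hab.reachable⟩

lemma IsSpanningTree.edgeSet_fromEdgeSet {T : Finset (Sym2 α)} (hT : IsSpanningTree G T) :
    (SimpleGraph.fromEdgeSet (T : Set (Sym2 α))).edgeSet = T := by
  rw [SimpleGraph.edgeSet_fromEdgeSet, sdiff_eq_left, Set.disjoint_left]
  exact fun e he => G.not_isDiag_of_mem_edgeSet (hT.1 he)

lemma sum_chi (T F : Finset (Sym2 α)) : ∑ e ∈ F, chi T e = #(T ∩ F) := by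
  simp [chi, inter_comm]

lemma isLinearMap_sum (F : Finset (Sym2 α)) :
    IsLinearMap ℝ (fun x : Sym2 α → ℝ => ∑ e ∈ F, x e) :=
  ⟨fun _ _ => sum_add_distrib, fun _ _ => (mul_sum _ _ _).symm⟩

lemma spanningTreePolytope_subset [Fintype α] {C : Set (Sym2 α → ℝ)} (hC : Convex ℝ C)
    (h : ∀ T, IsSpanningTree G T → chi T ∈ C) : spanningTreePolytope G ⊆ C :=
  convexHull_min (fun _ ⟨T, hT, hx⟩ => hx ▸ h T hT) hC

end Graphs

section EdgeSets

variable {G : SimpleGraph V} {S T : Finset V} {a b : V}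

lemma cutBetween_subset_edgeFinset : cutBetween G S T ⊆ G.edgeFinset := filter_subset _ _

lemma cut_subset_edgeFinset : cut G S ⊆ G.edgeFinset := cutBetween_subset_edgeFinset

lemma inducedEdges_subset_edgeFinset : inducedEdges G S ⊆ G.edgeFinset := filter_subset _ _

lemma mem_cutBetween_iff (h : G.Adj a b) :
    s(a, b) ∈ cutBetween G S T ↔ a ∈ S ∧ b ∈ T ∨ b ∈ S ∧ a ∈ T := by
  simp only [cutBetween, mem_filter, SimpleGraph.mem_edgeFinset, SimpleGraph.mem_edgeSet, h,
    true_and, Sym2.eq_iff]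
  constructor
  · rintro ⟨u, v, (⟨rfl, rfl⟩ | ⟨rfl, rfl⟩), hu, hv⟩
    exacts [.inl ⟨hu, hv⟩, .inr ⟨hu, hv⟩]
  · rintro (⟨ha, hb⟩ | ⟨hb, ha⟩)
    exacts [⟨a, b, .inl ⟨rfl, rfl⟩, ha, hb⟩, ⟨b, a, .inr ⟨rfl, rfl⟩, hb, ha⟩]

lemma mem_cut_iff (h : G.Adj a b) : s(a, b) ∈ cut G S ↔ (a ∈ S ↔ b ∉ S) := by
  rw [cut, mem_cutBetween_iff h, mem_compl, mem_compl]
  tauto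

lemma mem_inducedEdges_iff (h : G.Adj a b) : s(a, b) ∈ inducedEdges G S ↔ a ∈ S ∧ b ∈ S := by
  simp [inducedEdges, h]

lemma cut_compl : cut G Sᶜ = cut G S := by
  ext e
  refine ⟨fun he => ?_, fun he => ?_⟩ <;>
  · have hG := cut_subset_edgeFinset he
    induction e using Sym2.ind with
    | _ u v =>
    rw [SimpleGraph.mem_edgeFinset, SimpleGraph.mem_edgeSet] at hG
    rw [mem_cut_iff hG, mem_compl, mem_compl] at *
    tauto

lemma cut_empty : cut G ∅ = ∅ := by
  simp [cut, cutBetween]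

lemma cut_univ : cut G univ = ∅ := by
  simp [cut, cutBetween]

lemma inducedEdges_univ : inducedEdges G univ = G.edgeFinset := by
  simp [inducedEdges]

lemma sum_eq_sum_edgeFinset_ite {F : Finset (Sym2 V)} (hF : F ⊆ G.edgeFinset)
    (x : Sym2 V → ℝ) :
    ∑ e ∈ F, x e = ∑ e ∈ G.edgeFinset, if e ∈ F then x e else 0 := by
  rw [sum_ite_mem, inter_eq_right.2 hF]

/-- The handshake identity, weighted by `x`. -/
theorem sum_sum_cut_singleton (G : SimpleGraph V) (x : Sym2 V → ℝ) (S : Finset V) :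
    ∑ v ∈ S, ∑ e ∈ cut G {v}, x e
      = 2 * ∑ e ∈ inducedEdges G S, x e + ∑ e ∈ cut G S, x e := by
  simp only [sum_eq_sum_edgeFinset_ite cut_subset_edgeFinset,
    sum_eq_sum_edgeFinset_ite inducedEdges_subset_edgeFinset, mul_sum, ← sum_add_distrib]
  rw [sum_comm]
  refine sum_congr rfl fun e he => ?_
  induction e using Sym2.ind with
  | _ u w =>
  rw [SimpleGraph.mem_edgeFinset, SimpleGraph.mem_edgeSet] at he
  have hne := he.ne
  generalize x s(u, w) = y
  have hsplit : ∀ v, (if s(u, w) ∈ cut G {v} then y else 0)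
      = (if u = v then y else 0) + (if w = v then y else 0) := by
    intro v
    simp only [mem_cut_iff he, mem_singleton]
    by_cases hu : u = v <;> by_cases hw : w = v <;> simp_all
  simp only [hsplit, sum_add_distrib, sum_ite_eq]
  simp only [mem_cut_iff he, mem_inducedEdges_iff he]
  by_cases hu : u ∈ S <;> by_cases hw : w ∈ S <;> simp [hu, hw, two_mul]

end EdgeSets

section SpanningTree

variable {G : SimpleGraph V} {T : Finset (Sym2 V)}

lemma IsSpanningTree.card_add_one (hT : IsSpanningTree G T) : #T + 1 = Fintype.card V := by
  have hE : (SimpleGraph.fromEdgeSet (T : Set (Sym2 V))).edgeFinset = T := by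
    rw [← coe_inj, SimpleGraph.coe_edgeFinset, hT.edgeSet_fromEdgeSet]
  simpa [hE] using hT.2.card_edgeFinset

/-- Contracting `S` in the tree leaves a connected graph; re-expanding `S` by a star on `|S| - 1`
edges gives a connected graph, which therefore has at least `|V| - 1` edges. -/
lemma IsSpanningTree.card_inter_inducedEdges_add_one_le (hT : IsSpanningTree G T)
    {S : Finset V} (hS : S.Nonempty) : #(T ∩ inducedEdges G S) + 1 ≤ #S := by
  obtain ⟨s, hs⟩ := hS
  set star := (S.erase s).image (fun v => s(s, v))
  set T' := T \ inducedEdges G S ∪ star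
  have hstar : ∀ v ∈ S, (SimpleGraph.fromEdgeSet (T' : Set (Sym2 V))).Reachable s v := by
    intro v hv
    rcases eq_or_ne s v with rfl | hsv
    · rfl
    refine SimpleGraph.Adj.reachable ((SimpleGraph.fromEdgeSet_adj _).2 ⟨?_, hsv⟩)
    exact mem_coe.2 (mem_union_right _ (mem_image_of_mem _ (mem_erase.2 ⟨hsv.symm, hv⟩)))
  have hconn : (SimpleGraph.fromEdgeSet (T' : Set (Sym2 V))).Connected := by
    refine hT.2.connected.of_forall_adj_reachable fun u v huv => ?_
    obtain ⟨huvT, hne⟩ := (SimpleGraph.fromEdgeSet_adj _).1 huv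
    have hG : G.Adj u v := hT.1 huvT
    by_cases hin : s(u, v) ∈ inducedEdges G S
    · rw [mem_inducedEdges_iff hG] at hin
      exact (hstar u hin.1).symm.trans (hstar v hin.2)
    · exact SimpleGraph.Adj.reachable ((SimpleGraph.fromEdgeSet_adj _).2
        ⟨mem_coe.2 (mem_union_left _ (mem_sdiff.2 ⟨huvT, hin⟩)), hne⟩)
  have hV : Fintype.card V ≤ #T' + 1 := by
    have h := hconn.card_vert_le_card_edgeSet_add_one
    rw [Nat.card_eq_fintype_card, Nat.card_coe_set_eq, SimpleGraph.edgeSet_fromEdgeSet] at h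
    exact h.trans (Nat.add_le_add_right ((Set.ncard_le_ncard Set.sdiff_subset).trans
      (Set.ncard_coe_finset _).le) 1)
  have hT' : #T' ≤ #(T \ inducedEdges G S) + (#S - 1) :=
    (card_union_le _ _).trans (Nat.add_le_add_left
      (card_image_le.trans (card_erase_of_mem hs).le) _)
  have := card_inter_add_card_sdiff T (inducedEdges G S)
  have := hT.card_add_one
  have := card_pos.2 ⟨s, hs⟩
  omega

variable {x : Sym2 V → ℝ}

lemma nonneg_of_mem_spanningTreePolytope (hx : x ∈ spanningTreePolytope G) (e : Sym2 V) :
    0 ≤ x e :=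
  spanningTreePolytope_subset (C := {x | 0 ≤ x e})
    (convex_halfSpace_ge (LinearMap.proj e).isLinear 0)
    (fun T _ => show 0 ≤ chi T e by unfold chi; split_ifs <;> simp) hx

lemma adj_of_mem_spanningTreePolytope (hx : x ∈ spanningTreePolytope G) {u v : V}
    (huv : 0 < x s(u, v)) : G.Adj u v := by
  by_contra hG
  exact huv.ne' <| spanningTreePolytope_subset (C := {x | x s(u, v) = 0})
    (convex_hyperplane (LinearMap.proj _).isLinear 0) (fun _ hT => if_neg fun h => hG (hT.1 h)) hx

lemma sum_edgeFinset_of_mem_spanningTreePolytope (hx : x ∈ spanningTreePolytope G) :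
    ∑ e ∈ G.edgeFinset, x e = Fintype.card V - 1 := by
  refine spanningTreePolytope_subset (C := {x | ∑ e ∈ G.edgeFinset, x e = Fintype.card V - 1})
    (convex_hyperplane (isLinearMap_sum _) _) (fun T hT => ?_) hx
  have hTG : T ⊆ G.edgeFinset := fun e he => SimpleGraph.mem_edgeFinset.2 (hT.1 he)
  simp only [Set.mem_ofPred_eq, sum_chi, inter_eq_left.2 hTG, ← hT.card_add_one]
  push_cast
  ring

lemma sum_inducedEdges_le_of_mem_spanningTreePolytope (hx : x ∈ spanningTreePolytope G)
    {S : Finset V} (hS : S.Nonempty) : ∑ e ∈ inducedEdges G S, x e ≤ #S - 1 := by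
  refine spanningTreePolytope_subset (C := {x | ∑ e ∈ inducedEdges G S, x e ≤ #S - 1})
    (convex_halfSpace_le (isLinearMap_sum _) _) (fun T hT => ?_) hx
  have := hT.card_inter_inducedEdges_add_one_le hS
  simp only [Set.mem_ofPred_eq, sum_chi]
  rw [le_sub_iff_add_le]
  exact_mod_cast this

lemma sum_inducedEdges_le_of_split (hx : x ∈ spanningTreePolytope G) {S A : Finset V}
    (hAS : A ⊆ S) (hA : A.Nonempty) (hSA : (S \ A).Nonempty)
    (h0 : ∀ a ∈ A, ∀ b ∈ S \ A, x s(a, b) = 0) :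
    ∑ e ∈ inducedEdges G S, x e ≤ #S - 2 := by
  have hsplit : ∑ e ∈ inducedEdges G S, x e
      ≤ ∑ e ∈ inducedEdges G A, x e + ∑ e ∈ inducedEdges G (S \ A), x e := by
    simp only [sum_eq_sum_edgeFinset_ite inducedEdges_subset_edgeFinset, ← sum_add_distrib]
    refine sum_le_sum fun e he => ?_
    induction e using Sym2.ind with
    | _ u v =>
    rw [SimpleGraph.mem_edgeFinset, SimpleGraph.mem_edgeSet] at he
    have hcross : u ∈ S → v ∈ S → (u ∈ A ↔ v ∉ A) → x s(u, v) = 0 := by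
      intro hu hv huv
      by_cases hua : u ∈ A
      · exact h0 u hua v (mem_sdiff.2 ⟨hv, huv.1 hua⟩)
      · exact Sym2.eq_swap ▸ h0 v (by tauto) u (mem_sdiff.2 ⟨hu, hua⟩)
    have := nonneg_of_mem_spanningTreePolytope hx s(u, v)
    simp only [mem_inducedEdges_iff he, mem_sdiff]
    split_ifs <;> first | linarith | linarith [hcross (by tauto) (by tauto) (by tauto)]
  have hcard : (#A : ℝ) + #(S \ A) = #S := by
    exact_mod_cast (add_comm _ _).trans (card_sdiff_add_card_eq_card hAS)
  linarith [sum_inducedEdges_le_of_mem_spanningTreePolytope hx hA,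
    sum_inducedEdges_le_of_mem_spanningTreePolytope hx hSA]

end SpanningTree

section Layers

variable {G : SimpleGraph V} {x : Sym2 V → ℝ} {ℓ : V → ℕ} {k : ℕ}

def layer (ℓ : V → ℕ) (i : ℕ) : Finset V := {v | ℓ v = i}

def layersBelow (ℓ : V → ℕ) (i : ℕ) : Finset V := {v | ℓ v < i}

lemma layersBelow_zero : layersBelow ℓ 0 = ∅ := by
  simp [layersBelow]

lemma sum_cut_layersBelow_zero (G : SimpleGraph V) (x : Sym2 V → ℝ) (ℓ : V → ℕ) :
    ∑ e ∈ cut G (layersBelow ℓ 0), x e = 0 := by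
  rw [layersBelow_zero, cut_empty, sum_empty]

lemma layer_zero : layer ℓ 0 = layersBelow ℓ 1 := by
  ext; simp [layer, layersBelow]

lemma layersBelow_succ_sdiff (i : ℕ) : layersBelow ℓ (i + 1) \ layersBelow ℓ i = layer ℓ i := by
  ext; simp [layer, layersBelow]; omega

lemma layersBelow_eq_univ {i : ℕ} (hℓ : ∀ v, ℓ v < i) : layersBelow ℓ i = univ := by
  ext v; simpa [layersBelow] using hℓ v

lemma layer_eq_compl {i : ℕ} (hℓ : ∀ v, ℓ v ≤ i) : layer ℓ i = (layersBelow ℓ i)ᶜ := by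
  ext v; have := hℓ v; simp [layer, layersBelow]; omega

lemma sum_cut_layer_le (G : SimpleGraph V) (ℓ : V → ℕ) (hx : ∀ e, 0 ≤ x e) (m : ℕ) :
    ∑ e ∈ cut G (layer ℓ m), x e
      ≤ ∑ e ∈ cut G (layersBelow ℓ m), x e + ∑ e ∈ cut G (layersBelow ℓ (m + 1)), x e := by
  simp only [sum_eq_sum_edgeFinset_ite cut_subset_edgeFinset, ← sum_add_distrib]
  refine sum_le_sum fun e he => ?_
  induction e using Sym2.ind with
  | _ u v =>
  rw [SimpleGraph.mem_edgeFinset, SimpleGraph.mem_edgeSet] at he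
  have := hx s(u, v)
  simp only [mem_cut_iff he, layer, layersBelow, mem_filter, mem_univ, true_and]
  split_ifs <;> first | linarith | omega

lemma sum_cut_layer_add_le (G : SimpleGraph V) (ℓ : V → ℕ) (hx : ∀ e, 0 ≤ x e) (i : ℕ) :
    ∑ e ∈ cut G (layer ℓ i), x e + ∑ e ∈ cut G (layer ℓ (i + 1)), x e
      ≤ ∑ e ∈ cut G (layersBelow ℓ i), x e + ∑ e ∈ cut G (layersBelow ℓ (i + 2)), x e
        + 2 * ∑ e ∈ cutBetween G (layer ℓ i) (layer ℓ (i + 1)), x e := by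
  simp only [sum_eq_sum_edgeFinset_ite cut_subset_edgeFinset,
    sum_eq_sum_edgeFinset_ite cutBetween_subset_edgeFinset, mul_sum, ← sum_add_distrib]
  refine sum_le_sum fun e he => ?_
  induction e using Sym2.ind with
  | _ u v =>
  rw [SimpleGraph.mem_edgeFinset, SimpleGraph.mem_edgeSet] at he
  have := hx s(u, v)
  simp only [mem_cut_iff he, mem_cutBetween_iff he, layer, layersBelow, mem_filter, mem_univ,
    true_and]
  split_ifs <;> first | linarith | omega

end Layers

def layeredSupportGraph (x : Sym2 V → ℝ) (ℓ : V → ℕ) (k : ℕ) (a b : ℕ → V) :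
    SimpleGraph V :=
  SimpleGraph.fromRel fun u v => 0 < x s(u, v) ∧ (ℓ u = ℓ v ∨ ∃ i ≤ k, u = a i ∧ v = b i)

/-- A chain-point rewritten through a level function `ℓ`, with `V_i = {v | ℓ v ≤ i}`, so that
`V_i = layersBelow ℓ (i + 1)` and `L_i = layer ℓ i`. -/
structure IsLayeredChainPoint (G : SimpleGraph V) (ℓ : V → ℕ) (k : ℕ) (x : Sym2 V → ℝ) :
    Prop where
  mem_spanningTreePolytope : x ∈ spanningTreePolytope G
  le : ∀ v, ℓ v ≤ k + 1
  layer_nonempty : ∀ i ≤ k + 1, (layer ℓ i).Nonempty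
  sum_cut_one : ∑ e ∈ cut G (layersBelow ℓ 1), x e = 1
  sum_cut_last : ∑ e ∈ cut G (layersBelow ℓ (k + 1)), x e = 1
  sum_cut_lt_two : ∀ i, ∑ e ∈ cut G (layersBelow ℓ i), x e < 2
  sum_degree_layer : ∀ i, 1 ≤ i → i ≤ k →
    ∑ v ∈ layer ℓ i, ∑ e ∈ cut G {v}, x e = 2 * #(layer ℓ i)

namespace IsLayeredChainPoint

variable {G : SimpleGraph V} {x : Sym2 V → ℝ} {ℓ : V → ℕ} {k : ℕ} {a b : ℕ → V}

lemma nonneg (h : IsLayeredChainPoint G ℓ k x) (e : Sym2 V) : 0 ≤ x e :=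
  nonneg_of_mem_spanningTreePolytope h.mem_spanningTreePolytope e

lemma sum_cut_layer_zero (h : IsLayeredChainPoint G ℓ k x) :
    ∑ e ∈ cut G (layer ℓ 0), x e = 1 := by
  rw [layer_zero, h.sum_cut_one]

lemma sum_cut_layer_last (h : IsLayeredChainPoint G ℓ k x) :
    ∑ e ∈ cut G (layer ℓ (k + 1)), x e = 1 := by
  rw [layer_eq_compl h.le, cut_compl, h.sum_cut_last]

lemma sum_cut_layersBelow_last (h : IsLayeredChainPoint G ℓ k x) :
    ∑ e ∈ cut G (layersBelow ℓ (k + 2)), x e = 0 := by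
  rw [layersBelow_eq_univ fun v => Nat.lt_succ_of_le (h.le v), cut_univ, sum_empty]

lemma two_le_sum_cut_layer (h : IsLayeredChainPoint G ℓ k x) {i : ℕ} (hi₁ : 1 ≤ i)
    (hi₂ : i ≤ k) : 2 ≤ ∑ e ∈ cut G (layer ℓ i), x e := by
  linarith [sum_sum_cut_singleton G x (layer ℓ i), h.sum_degree_layer i hi₁ hi₂,
    sum_inducedEdges_le_of_mem_spanningTreePolytope h.mem_spanningTreePolytope
      (h.layer_nonempty i (by omega))]

lemma sum_degree_layer_end_le (h : IsLayeredChainPoint G ℓ k x) {m : ℕ}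
    (hm : m = 0 ∨ m = k + 1) :
    ∑ v ∈ layer ℓ m, ∑ e ∈ cut G {v}, x e ≤ 2 * #(layer ℓ m) - 1 := by
  have hcut : ∑ e ∈ cut G (layer ℓ m), x e = 1 := by
    rcases hm with rfl | rfl
    exacts [h.sum_cut_layer_zero, h.sum_cut_layer_last]
  linarith [sum_sum_cut_singleton G x (layer ℓ m),
    sum_inducedEdges_le_of_mem_spanningTreePolytope h.mem_spanningTreePolytope
      (h.layer_nonempty m (by omega))]

/-- Double counting over all vertices: the total degree is `2 (|V| - 1)`, and the middle layers
account for exactly twice their size. -/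
lemma sum_degree_layer_zero_add_last (h : IsLayeredChainPoint G ℓ k x) :
    ∑ v ∈ layer ℓ 0, ∑ e ∈ cut G {v}, x e + ∑ v ∈ layer ℓ (k + 1), ∑ e ∈ cut G {v}, x e
      = 2 * #(layer ℓ 0) + 2 * #(layer ℓ (k + 1)) - 2 := by
  have hmaps : ∀ v ∈ (univ : Finset V), ℓ v ∈ range (k + 2) :=
    fun v _ => mem_range.2 (Nat.lt_succ_of_le (h.le v))
  have hdeg := sum_sum_cut_singleton G x univ
  rw [cut_univ, sum_empty, inducedEdges_univ,
    sum_edgeFinset_of_mem_spanningTreePolytope h.mem_spanningTreePolytope,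
    ← sum_fiberwise_of_maps_to hmaps, sum_range_succ, sum_range_succ'] at hdeg
  have hcard : (Fintype.card V : ℝ) = ∑ i ∈ range (k + 2), (#(layer ℓ i) : ℝ) := by
    rw [← card_univ, card_eq_sum_card_fiberwise hmaps]
    push_cast
    rfl
  rw [sum_range_succ, sum_range_succ'] at hcard
  have hmid : ∑ i ∈ range k, ∑ v ∈ layer ℓ (i + 1), ∑ e ∈ cut G {v}, x e
      = 2 * ∑ i ∈ range k, (#(layer ℓ (i + 1)) : ℝ) := by
    rw [mul_sum]
    exact sum_congr rfl fun i hi => h.sum_degree_layer (i + 1) (by omega)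
      (by have := mem_range.1 hi; omega)
  simp only [layer] at *
  linarith


/-- A split of `L_m` with no support edge across would leave `E(L_m)` two edges short of a
spanning tree, forcing `x(δ(L_m))` above what the two chain cuts around `L_m` can carry; at the
end levels it contradicts the double counting instead. -/
lemma exists_pos_of_split (h : IsLayeredChainPoint G ℓ k x) {m : ℕ} (hm : m ≤ k + 1)
    {A : Finset V} (hA : A ⊆ layer ℓ m) (hA₁ : A.Nonempty) (hA₂ : (layer ℓ m \ A).Nonempty) :
    ∃ a ∈ A, ∃ b ∈ layer ℓ m \ A, 0 < x s(a, b) := by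
  by_contra! hzero
  have hsplit := sum_inducedEdges_le_of_split h.mem_spanningTreePolytope hA hA₁ hA₂
    fun a ha b hb => le_antisymm (hzero a ha b hb) (h.nonneg _)
  have hdeg := sum_sum_cut_singleton G x (layer ℓ m)
  have hcut := sum_cut_layer_le G ℓ h.nonneg m
  rcases Nat.eq_zero_or_pos m with rfl | hm₀
  · linarith [h.sum_degree_layer_zero_add_last, h.sum_degree_layer_end_le (Or.inr rfl),
      h.sum_cut_layer_zero]
  rcases hm.eq_or_lt with rfl | hmk
  · linarith [h.sum_degree_layer_zero_add_last, h.sum_degree_layer_end_le (Or.inl rfl),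
      h.sum_cut_layer_last]
  linarith [h.sum_degree_layer m hm₀ (by omega), h.sum_cut_lt_two m, h.sum_cut_lt_two (m + 1)]

lemma exists_pos_between_layers (h : IsLayeredChainPoint G ℓ k x) {i : ℕ} (hi : i ≤ k) :
    ∃ a ∈ layer ℓ i, ∃ b ∈ layer ℓ (i + 1), 0 < x s(a, b) := by
  by_contra! hzero
  have hZ : ∑ e ∈ cutBetween G (layer ℓ i) (layer ℓ (i + 1)), x e ≤ 0 := by
    refine sum_nonpos fun e he => ?_
    induction e using Sym2.ind with
    | _ u v =>
    have hG : G.Adj u v := by simpa using cutBetween_subset_edgeFinset he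
    rcases (mem_cutBetween_iff hG).1 he with ⟨hu, hv⟩ | ⟨hv, hu⟩
    exacts [hzero u hu v hv, Sym2.eq_swap ▸ hzero v hv u hu]
  have hcut := sum_cut_layer_add_le G ℓ h.nonneg i
  have hlt := h.sum_cut_lt_two
  rcases Nat.eq_zero_or_pos i with rfl | hi₀ <;> rcases hi.eq_or_lt with hik | hik
  · subst hik
    linarith [h.sum_cut_layer_zero, h.sum_cut_layer_last, sum_cut_layersBelow_zero G x ℓ,
      h.sum_cut_layersBelow_last]
  · linarith [h.sum_cut_layer_zero, h.two_le_sum_cut_layer le_rfl hik, hlt 2,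
      sum_cut_layersBelow_zero G x ℓ]
  · subst hik
    linarith [h.two_le_sum_cut_layer hi₀ le_rfl, h.sum_cut_layer_last, hlt i,
      h.sum_cut_layersBelow_last]
  · linarith [h.two_le_sum_cut_layer hi₀ hik.le, h.two_le_sum_cut_layer (by omega) hik, hlt i,
      hlt (i + 2)]


lemma connected_layeredSupportGraph (h : IsLayeredChainPoint G ℓ k x)
    (ha : ∀ i ≤ k, a i ∈ layer ℓ i) (hb : ∀ i ≤ k, b i ∈ layer ℓ (i + 1))
    (hab : ∀ i ≤ k, 0 < x s(a i, b i)) : (layeredSupportGraph x ℓ k a b).Connected := by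
  set H := layeredSupportGraph x ℓ k a b
  have hlayer : ∀ m ≤ k + 1, ∀ u ∈ layer ℓ m, ∀ v ∈ layer ℓ m, H.Reachable u v := by
    refine fun m hm u hu v hv =>
      SimpleGraph.reachable_of_forall_exists_adj (fun A hA hA₁ hA₂ => ?_) hu hv
    obtain ⟨c, hc, d, hd, hcd⟩ := h.exists_pos_of_split hm hA hA₁ hA₂
    refine ⟨c, hc, d, hd, (SimpleGraph.fromRel_adj _ _ _).2 ⟨?_, .inl ⟨hcd, .inl ?_⟩⟩⟩
    · rintro rfl; exact (mem_sdiff.1 hd).2 hc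
    · have := hA hc; have := (mem_sdiff.1 hd).1; simp_all [layer]
  have hbase : ∀ m ≤ k + 1, ∀ v ∈ layer ℓ m, H.Reachable v (a 0) := by
    intro m
    induction m with
    | zero => exact fun _ v hv => hlayer 0 (Nat.zero_le _) v hv _ (ha 0 (Nat.zero_le _))
    | succ m ih =>
      intro hm v hv
      have hadj : H.Adj (a m) (b m) := by
        refine (SimpleGraph.fromRel_adj _ _ _).2
          ⟨?_, .inl ⟨hab m (by omega), .inr ⟨m, by omega, rfl, rfl⟩⟩⟩
        have := ha m (by omega); have := hb m (by omega)
        rintro hmm; simp_all [layer]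
      exact (hlayer _ hm v hv _ (hb m (by omega))).trans
        (hadj.symm.reachable.trans (ih (by omega) _ (ha m (by omega))))
  have : Nonempty V := ⟨a 0⟩
  exact ⟨fun u v => (hbase _ (h.le u) u (by simp [layer])).trans
    (hbase _ (h.le v) v (by simp [layer])).symm⟩

lemma inter_cut_layersBelow_subset (ha : ∀ i ≤ k, a i ∈ layer ℓ i)
    (hb : ∀ i ≤ k, b i ∈ layer ℓ (i + 1)) {T : SimpleGraph V}
    (hT : T ≤ layeredSupportGraph x ℓ k a b) {i : ℕ} :
    T.edgeFinset ∩ cut G (layersBelow ℓ (i + 1)) ⊆ {s(a i, b i)} := by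
  intro e he
  rw [mem_inter] at he
  induction e using Sym2.ind with
  | _ u v =>
  have hG : G.Adj u v := by simpa using cut_subset_edgeFinset he.2
  have hcut := (mem_cut_iff hG).1 he.2
  rcases ((SimpleGraph.fromRel_adj _ _ _).1 (hT (SimpleGraph.mem_edgeFinset.1 he.1))).2 with
    ⟨-, hℓ | ⟨j, hj, rfl, rfl⟩⟩ | ⟨-, hℓ | ⟨j, hj, rfl, rfl⟩⟩
  all_goals simp only [layersBelow, mem_filter, mem_univ, true_and] at hcut
  · dsimp only at hℓ; omega
  · have := ha j hj; have := hb j hj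
    simp only [layer, mem_filter, mem_univ, true_and] at *
    obtain rfl : j = i := by omega
    exact mem_singleton_self _
  · dsimp only at hℓ; omega
  · have := ha j hj; have := hb j hj
    simp only [layer, mem_filter, mem_univ, true_and] at *
    obtain rfl : j = i := by omega
    rw [Sym2.eq_swap]; exact mem_singleton_self _

theorem exists_spanningTree (h : IsLayeredChainPoint G ℓ k x) :
    ∃ T : Finset (Sym2 V), IsSpanningTree G T ∧
      (∀ i ≤ k, #(T ∩ cut G (layersBelow ℓ (i + 1))) = 1) ∧ ∀ e ∈ T, 0 < x e := by
  have : Nonempty V := (h.layer_nonempty 0 (Nat.zero_le _)).to_type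
  choose! a ha b hb hab using fun i (hi : i ≤ k) => h.exists_pos_between_layers hi
  obtain ⟨T, hTH, hT⟩ := (h.connected_layeredSupportGraph ha hb hab).exists_isTree_le
  have hpos : ∀ e ∈ T.edgeFinset, 0 < x e := fun e he => by
    induction e using Sym2.ind with
    | _ u v =>
    rcases ((SimpleGraph.fromRel_adj _ _ _).1 (hTH (SimpleGraph.mem_edgeFinset.1 he))).2 with
      ⟨hpos, -⟩ | ⟨hpos, -⟩
    exacts [hpos, Sym2.eq_swap ▸ hpos]
  refine ⟨T.edgeFinset, ⟨fun e he => ?_, by simpa using hT⟩, fun i hi => ?_, hpos⟩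
  · induction e using Sym2.ind with
    | _ u v => exact adj_of_mem_spanningTreePolytope h.mem_spanningTreePolytope (hpos _ he)
  obtain ⟨u, hu⟩ := h.layer_nonempty 0 (Nat.zero_le _)
  obtain ⟨v, hv⟩ := h.layer_nonempty (k + 1) le_rfl
  obtain ⟨c, d, hcd, hc, hd⟩ := hT.connected.exists_adj_mem_not_mem
    (S := layersBelow ℓ (i + 1)) (u := u) (v := v) (by simp_all [layer, layersBelow])
    (by simp_all [layer, layersBelow])
  have hcd' : s(c, d) ∈ T.edgeFinset := SimpleGraph.mem_edgeFinset.2 hcd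
  have hne : (T.edgeFinset ∩ cut G (layersBelow ℓ (i + 1))).Nonempty :=
    ⟨s(c, d), mem_inter.2 ⟨hcd', (mem_cut_iff (adj_of_mem_spanningTreePolytope
      h.mem_spanningTreePolytope (hpos _ hcd'))).2 (by tauto)⟩⟩
  rw [(hne.subset_singleton_iff).1 (inter_cut_layersBelow_subset ha hb hTH), card_singleton]

end IsLayeredChainPoint

lemma exists_layersBelow_eq (Vc : ℕ → Finset V) (k : ℕ) (hchain : ∀ i < k, Vc i ⊂ Vc (i + 1)) :
    ∃ ℓ : V → ℕ, (∀ v, ℓ v ≤ k + 1) ∧ ∀ i ≤ k, Vc i = layersBelow ℓ (i + 1) := by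
  set W : ℕ → Finset V := fun i => if i ≤ k then Vc i else univ
  have hW : Monotone W := monotone_nat_of_le_succ fun i => by
    by_cases hi : i < k
    · simpa [W, hi.le, Nat.succ_le_of_lt hi] using (hchain i hi).subset
    · simp [W, show ¬ i + 1 ≤ k by omega]
  have hex : ∀ v, ∃ i, v ∈ W i := fun v => ⟨k + 1, by simp [W]⟩
  refine ⟨fun v => Nat.find (hex v), fun v => Nat.find_min' _ (by simp [W]), fun i hi => ?_⟩
  ext v
  simp only [layersBelow, mem_filter, mem_univ, true_and, Nat.lt_succ_iff, Nat.find_le_iff]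
  constructor
  · exact fun hv => ⟨i, le_rfl, by simpa [W, hi] using hv⟩
  · rintro ⟨j, hj, hv⟩
    simpa [W, hi] using hW hj hv

lemma IsChainPoint.isLayeredChainPoint {G : SimpleGraph V} {Vc : ℕ → Finset V} {k : ℕ}
    {x : Sym2 V → ℝ} (hx : IsChainPoint G Vc k x) (hne : (Vc 0).Nonempty)
    (hchain : ∀ i < k, Vc i ⊂ Vc (i + 1)) (htop : Vc k ⊂ univ) {ℓ : V → ℕ}
    (hℓ : ∀ v, ℓ v ≤ k + 1) (hVc : ∀ i ≤ k, Vc i = layersBelow ℓ (i + 1)) :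
    IsLayeredChainPoint G ℓ k x where
  mem_spanningTreePolytope := hx.1
  le := hℓ
  layer_nonempty i hi := by
    rcases i with _ | i
    · rwa [layer_zero, ← hVc 0 (Nat.zero_le _)]
    rw [← layersBelow_succ_sdiff, sdiff_nonempty]
    rcases (Nat.lt_or_ge i k) with hik | hik
    · rw [← hVc (i + 1) hik, ← hVc i hik.le]
      exact (hchain i hik).2
    · rw [layersBelow_eq_univ fun v => by have := hℓ v; omega, ← hVc i (by omega)]
      obtain rfl : i = k := by omega
      exact htop.2
  sum_cut_one := hVc 0 (Nat.zero_le _) ▸ hx.2.1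
  sum_cut_last := hVc k le_rfl ▸ hx.2.2.1
  sum_cut_lt_two i := by
    rcases i with _ | i
    · rw [layersBelow_zero, cut_empty, sum_empty]; norm_num
    rcases (Nat.lt_or_ge k i) with hik | hik
    · rw [layersBelow_eq_univ fun v => by have := hℓ v; omega, cut_univ, sum_empty]; norm_num
    rw [← hVc i hik]
    rcases Nat.eq_zero_or_pos i with rfl | hi₀
    · rw [hx.2.1]; norm_num
    rcases hik.eq_or_lt with rfl | hik
    · rw [hx.2.2.1]; norm_num
    exact hx.2.2.2.1 i hi₀ (by omega)
  sum_degree_layer i hi₁ hi₂ := by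
    have hlevel : level Vc k i = layer ℓ i := by
      rw [level, if_neg (by omega), if_pos hi₂, hVc i hi₂, hVc (i - 1) (by omega),
        Nat.sub_add_cancel hi₁, layersBelow_succ_sdiff]
    exact hlevel ▸ hx.2.2.2.2 i hi₁ hi₂

theorem stmt14_general (G : SimpleGraph V)
    (Vc : ℕ → Finset V) (k : ℕ)
    (hne : (Vc 0).Nonempty) (hchain : ∀ i < k, Vc i ⊂ Vc (i + 1))
    (htop : Vc k ⊂ Finset.univ)
    (x : Sym2 V → ℝ) (hx : IsChainPoint G Vc k x) :
    ∃ T : Finset (Sym2 V), IsGaoTree G Vc k T ∧ ∀ e ∈ T, 0 < x e := by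
  obtain ⟨ℓ, hℓ, hVc⟩ := exists_layersBelow_eq Vc k hchain
  obtain ⟨T, hT, hcut, hpos⟩ :=
    (hx.isLayeredChainPoint hne hchain htop hℓ hVc).exists_spanningTree
  exact ⟨T, ⟨hT, fun i hi => hVc i hi ▸ hcut i hi⟩, hpos⟩

theorem stmt14 (G : SimpleGraph V) (hG : G.Connected)
    (Vc : ℕ → Finset V) (k : ℕ)
    (hne : (Vc 0).Nonempty) (hchain : ∀ i < k, Vc i ⊂ Vc (i + 1))
    (htop : Vc k ⊂ Finset.univ)
    (x : Sym2 V → ℝ) (hx : IsChainPoint G Vc k x) :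
    ∃ T : Finset (Sym2 V), IsGaoTree G Vc k T ∧ ∀ e ∈ T, 0 < x e :=
  stmt14_general G Vc k hne hchain htop x hx
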